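/- Let Γ be a multigraph and let e be an edge of Γ that is not a loop and is the largest edge in the fixed linear order on E. Then there is a short exact sequence of chain complexes 0 → C_conn(Γ∖e) →α C_conn(Γ) →β C_conn(Γ/e) → 0, where: α sends a connected subgraph S ⊆ E∖{e} of Γ∖e of cardinality i to the same subset S viewed as a connected subgraph of Γ (degree i to degree i); β sends a connected subgraph S ⊆ E of Γ of cardinality i to the connected subgraph (S∖{e}) of Γ/e of cardinality i−1 if e ∈ S, and to 0 if e ∉ S. In particular α and β commute with the differentials, α is injective, β is surjective, and the image of α equals the kernel of β in every degree. -/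

import Mathlib

/-!
Statement 12. Let `e` be a non-loop edge of a multigraph `Γ` which is largest in the fixed
linear order on the edges.  Then there is a short exact sequence of chain complexes
`0 → C_conn(Γ∖e) →α C_conn(Γ) →β C_conn(Γ/e) → 0`, where `α` includes a connected subgraph
of `Γ∖e` into `Γ` (degree `i` to degree `i`), and `β` sends a connected subgraph `S` of `Γ`
to `S∖{e}` in `Γ/e` if `e ∈ S` (degree `i` to degree `i − 1`) and to `0` otherwise:
`α` and `β` are chain maps, `α` is injective, `β` is surjective, and the image of `α`
equals the kernel of `β` in every degree.
-/

noncomputable section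

open scoped Classical

variable {V E : Type}

/-- One step of a walk: `x` and `y` are joined by an edge of `S`. -/
def StepRel (ends : E → Sym2 V) (S : Finset E) (x y : V) : Prop :=
  ∃ e ∈ S, ends e = s(x, y)

/-- The spanning subgraph `(V, S)` is connected. -/
def IsConn (ends : E → Sym2 V) (S : Finset E) : Prop :=
  ∀ a b : V, Relation.ReflTransGen (StepRel ends S) a b

/-- Connected spanning subgraphs with `i` edges: the basis of `C_conn(Γ)_i`. -/
def ConnSub (ends : E → Sym2 V) (i : ℕ) : Type _ :=
  {S : Finset E // S.card = i ∧ IsConn ends S}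

/-- The degree-`i` chain group of the complex of connected subgraphs. -/
abbrev CConn (ends : E → Sym2 V) (i : ℕ) : Type _ :=
  ConnSub ends i →₀ ℤ

/-- `ν(e, S)`: the number of edges of `S` strictly preceding `e`. -/
def nuEdge [LinearOrder E] (e : E) (S : Finset E) : ℕ :=
  (S.filter fun f => f < e).card

/-- The differential of `C_conn(Γ)`:
`d(S) = Σ (−1)^{ν(e,S)} (S∖{e})`, the sum over those `e ∈ S` whose removal keeps `(V, S∖{e})`
connected. -/
noncomputable def bdry [DecidableEq E] [LinearOrder E] (ends : E → Sym2 V) (i : ℕ) :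
    CConn ends (i + 1) →ₗ[ℤ] CConn ends i :=
  Finsupp.lsum ℤ fun S : ConnSub ends (i + 1) =>
    LinearMap.toSpanSingleton ℤ (CConn ends i)
      (∑ e ∈ S.1.attach,
        if h : IsConn ends (S.1.erase e.1) then
          ((-1 : ℤ) ^ nuEdge e.1 S.1) •
            Finsupp.single
              (⟨S.1.erase e.1, by simp [Finset.card_erase_of_mem e.2, S.2.1], h⟩ :
                ConnSub ends i) 1
        else 0)

/-- `H_0` of the complex of connected subgraphs. -/
abbrev ConnH0 [DecidableEq E] [LinearOrder E] (ends : E → Sym2 V) : Type _ :=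
  CConn ends 0 ⧸ LinearMap.range (bdry ends 0)

/-- `H_{i+1}` of the complex of connected subgraphs. -/
abbrev ConnH [DecidableEq E] [LinearOrder E] (ends : E → Sym2 V) (i : ℕ) : Type _ :=
  ↥(LinearMap.ker (bdry ends i)) ⧸
    Submodule.comap (LinearMap.ker (bdry ends i)).subtype
      (LinearMap.range (bdry ends (i + 1)))

/-- The map identifying the two endpoints `a`, `b` of a contracted edge (`b ↦ a`). -/
def contractMap [DecidableEq V] (a b : V) (hab : a ≠ b) : V → {v : V // v ≠ b} :=
  fun v => if h : v = b then ⟨a, hab⟩ else ⟨v, h⟩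

/-- The endpoint map of the contracted multigraph `Γ/e`. -/
def contractEnds [DecidableEq V] (ends : E → Sym2 V) (e : E) (a b : V) (hab : a ≠ b) :
    {f : E // f ≠ e} → Sym2 {v : V // v ≠ b} :=
  fun f => (ends f.1).map (contractMap a b hab)

/-!
Both maps come from maps of basis elements. `α` pushes a subgraph of `Γ∖e` forward into `Γ`;
`β` is the pullback along `T ↦ T ∪ {e}`, which is a bijection from the connected subgraphs of
`Γ/e` onto the connected subgraphs of `Γ` containing `e`, because contracting an edge of a
spanning subgraph does not change its connectivity. Hence `β` is surjective and its kernel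
consists of the chains supported on subgraphs avoiding `e`, which is exactly the image of the
injective map `α`. Both commute with the differentials because removing an edge `f ≠ e` commutes
with deleting or contracting `e`, and the sign `(-1)^ν(f, S)` ignores `e`, the largest edge.
-/

open Finset Function Relation

section Connectivity

variable {E' : Type} {ends : E → Sym2 V}

instance StepRel.instSymm (S : Finset E) : Std.Symm (StepRel ends S) :=
  ⟨fun _ _ ⟨f, hf, h⟩ => ⟨f, hf, h.trans Sym2.eq_swap⟩⟩

theorem IsConn.mono {S T : Finset E} (hS : IsConn ends S) (hST : S ⊆ T) : IsConn ends T :=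
  fun x y => ReflTransGen.mono (fun _ _ ⟨f, hf, h⟩ => ⟨f, hST hf, h⟩) _ _ (hS x y)

theorem stepRel_comp_eq_map (φ : E' ↪ E) (S : Finset E') :
    StepRel (fun f => ends (φ f)) S = StepRel ends (S.map φ) := by
  ext x y
  simp [StepRel]

theorem isConn_comp_iff (φ : E' ↪ E) (S : Finset E') :
    IsConn (fun f => ends (φ f)) S ↔ IsConn ends (S.map φ) := by
  rw [IsConn, IsConn, stepRel_comp_eq_map]

end Connectivity

section Contraction

variable [DecidableEq V] {a b : V} {hab : a ≠ b}

theorem contractMap_left : contractMap a b hab a = ⟨a, hab⟩ := dif_neg hab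

theorem contractMap_right : contractMap a b hab b = ⟨a, hab⟩ := dif_pos rfl

theorem contractMap_val (v : {v : V // v ≠ b}) : contractMap a b hab v = v := dif_neg v.2

variable {ends : E → Sym2 V} {e : E}

theorem reflTransGen_contractMap (hends : ends e = s(a, b)) {S : Finset E} (he : e ∈ S)
    (v : V) : ReflTransGen (StepRel ends S) v (contractMap a b hab v) := by
  by_cases hv : v = b
  · subst hv
    exact .single ⟨e, he, by rw [hends, contractMap_right, Sym2.eq_swap]⟩
  · rw [show (contractMap a b hab v : V) = v from congrArg Subtype.val (dif_neg hv)]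

variable [DecidableEq E]

theorem stepRel_contractEnds_le (hends : ends e = s(a, b)) (T : Finset {f : E // f ≠ e}) :
    StepRel (contractEnds ends e a b hab) T ≤
      (ReflTransGen (StepRel ends (insert e (T.map (Embedding.subtype _)))) on Subtype.val) := by
  rintro x y ⟨g, hg, hxy⟩
  have hc := reflTransGen_contractMap (hab := hab) hends
    (mem_insert_self e (T.map (Embedding.subtype _)))
  revert hxy
  change (ends g.1).map (contractMap a b hab) = _ → _
  induction hq : ends g.1 using Sym2.ind with
  | h u v =>
    intro hxy
    have hgS : g.1 ∈ insert e (T.map (Embedding.subtype _)) :=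
      mem_insert_of_mem (mem_map_of_mem _ hg)
    have huv : ReflTransGen _ (contractMap a b hab u : V) (contractMap a b hab v) :=
      (Std.Symm.symm _ _ (hc u)).trans ((ReflTransGen.single ⟨g.1, hgS, hq⟩).trans (hc v))
    rcases Sym2.eq_iff.mp hxy with ⟨rfl, rfl⟩ | ⟨rfl, rfl⟩
    exacts [huv, Std.Symm.symm _ _ huv]

theorem stepRel_le_contractEnds (hends : ends e = s(a, b)) (T : Finset {f : E // f ≠ e}) :
    StepRel ends (insert e (T.map (Embedding.subtype _))) ≤
      (ReflTransGen (StepRel (contractEnds ends e a b hab) T) on contractMap a b hab) := by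
  rintro u v ⟨f, hf, huv⟩
  by_cases hfe : f = e
  · subst hfe
    rw [hends] at huv
    rcases Sym2.eq_iff.mp huv with ⟨rfl, rfl⟩ | ⟨rfl, rfl⟩ <;>
      simp only [onFun, contractMap_left, contractMap_right] <;> exact .refl
  · have hfT : ⟨f, hfe⟩ ∈ T := by simpa [hfe] using hf
    exact .single ⟨⟨f, hfe⟩, hfT, by simp [contractEnds, huv]⟩

theorem isConn_contractEnds_iff (hends : ends e = s(a, b)) (T : Finset {f : E // f ≠ e}) :
    IsConn (contractEnds ends e a b hab) T ↔
      IsConn ends (insert e (T.map (Embedding.subtype _))) := by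
  have hc := reflTransGen_contractMap (hab := hab) hends
    (mem_insert_self e (T.map (Embedding.subtype _)))
  refine ⟨fun hT x y => ?_, fun hS x y => ?_⟩
  · have hxy := ReflTransGen.lift' _ (stepRel_contractEnds_le hends T) _ _
      (hT (contractMap a b hab x) (contractMap a b hab y))
    exact (hc x).trans (hxy.trans (Std.Symm.symm _ _ (hc y)))
  · simpa [onFun, contractMap_val] using
      ReflTransGen.lift' _ (stepRel_le_contractEnds (hab := hab) hends T) _ _ (hS x y)

end Contraction

section Chains

variable {ends : E → Sym2 V}

/-- The basis element `S` of `C_conn(Γ)_i`, extended by `0` to all edge sets so that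
`bdry_chainOf` holds for every `S`. -/
def chainOf (ends : E → Sym2 V) (i : ℕ) (S : Finset E) : CConn ends i :=
  if h : S.card = i ∧ IsConn ends S then Finsupp.single (⟨S, h⟩ : ConnSub ends i) 1 else 0

theorem chainOf_apply [DecidableEq E] {i : ℕ} (S : Finset E) (T : ConnSub ends i) :
    chainOf ends i S T = if T.1 = S then 1 else 0 := by
  by_cases h : S.card = i ∧ IsConn ends S
  · rw [chainOf, dif_pos h]
    exact Finsupp.single_apply.trans <|
      if_congr ⟨fun hST => by subst hST; rfl, fun hTS => Subtype.ext hTS.symm⟩ rfl rfl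
  · rw [chainOf, dif_neg h, if_neg fun hTS : T.1 = S => h (hTS ▸ T.2)]
    rfl

theorem chainOf_val {i : ℕ} (S : ConnSub ends i) : chainOf ends i S.1 = Finsupp.single S 1 :=
  dif_pos S.2

theorem CConn.linearMap_ext {M : Type} [AddCommGroup M] {i : ℕ} {f g : CConn ends i →ₗ[ℤ] M}
    (h : ∀ S : ConnSub ends i, f (chainOf ends i S.1) = g (chainOf ends i S.1)) : f = g :=
  Finsupp.lhom_ext' fun S => LinearMap.ext_ring <| by simpa [chainOf_val] using h S

variable [DecidableEq E] [LinearOrder E]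

theorem bdry_chainOf (i : ℕ) (S : Finset E) :
    bdry ends i (chainOf ends (i + 1) S) =
      ∑ f ∈ S, ((-1 : ℤ) ^ nuEdge f S) • chainOf ends i (S.erase f) := by
  by_cases hS : S.card = i + 1 ∧ IsConn ends S
  · obtain ⟨S, rfl⟩ : ∃ T : ConnSub ends (i + 1), T.1 = S := ⟨⟨S, hS⟩, rfl⟩
    rw [chainOf_val, bdry, Finsupp.lsum_single, LinearMap.toSpanSingleton_apply_one,
      ← sum_attach S.1]
    refine sum_congr rfl fun f _ => ?_
    have hcard : (S.1.erase f).card = i := by simp [card_erase_of_mem f.2, S.2.1]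
    by_cases hf : IsConn ends (S.1.erase f)
    · rw [dif_pos hf, chainOf, dif_pos ⟨hcard, hf⟩]
      rfl
    · rw [dif_neg hf, chainOf, dif_neg fun h => hf h.2, smul_zero]
  · rw [chainOf, dif_neg hS, map_zero]
    refine (sum_eq_zero fun f hf => ?_).symm
    rw [chainOf, dif_neg, smul_zero]
    rintro ⟨hcard, hconn⟩
    exact hS ⟨by rw [← card_erase_add_one hf, hcard], hconn.mono (erase_subset f S)⟩

end Chains

section Deletion

variable {E' : Type} {ends : E → Sym2 V} (φ : E' ↪ E)

def ConnSub.map {i : ℕ} (S : ConnSub (fun f => ends (φ f)) i) : ConnSub ends i :=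
  ⟨S.1.map φ, by rw [card_map, S.2.1], (isConn_comp_iff φ S.1).1 S.2.2⟩

theorem ConnSub.map_injective (i : ℕ) :
    Injective (ConnSub.map (ends := ends) φ (i := i)) := fun _ _ h =>
  Subtype.ext (Finset.map_injective φ (congrArg Subtype.val h))

def CConn.map (i : ℕ) : CConn (fun f => ends (φ f)) i →ₗ[ℤ] CConn ends i :=
  Finsupp.lmapDomain ℤ ℤ (ConnSub.map φ)

theorem CConn.map_injective (i : ℕ) : Injective (CConn.map (ends := ends) φ i) :=
  Finsupp.mapDomain_injective (ConnSub.map_injective φ i)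

theorem CConn.map_chainOf {i : ℕ} (S : Finset E') :
    CConn.map φ i (chainOf (fun f => ends (φ f)) i S) = chainOf ends i (S.map φ) := by
  by_cases hS : S.card = i ∧ IsConn (fun f => ends (φ f)) S
  · obtain ⟨S, rfl⟩ : ∃ T : ConnSub (fun f => ends (φ f)) i, T.1 = S :=
      ⟨⟨S, hS⟩, rfl⟩
    rw [chainOf_val, CConn.map, Finsupp.lmapDomain_apply, Finsupp.mapDomain_single,
      ← chainOf_val]
    rfl
  · rw [chainOf, dif_neg hS, map_zero, chainOf, dif_neg]
    rwa [card_map, ← isConn_comp_iff]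

theorem CConn.map_single_one_apply [DecidableEq E] (i : ℕ) (S : ConnSub (fun f => ends (φ f)) i)
    (T : ConnSub ends i) :
    CConn.map φ i (Finsupp.single S 1) T = if T.1 = S.1.map φ then 1 else 0 := by
  rw [← chainOf_val, CConn.map_chainOf, chainOf_apply]

theorem ConnSub.range_map_subtype (e : E) (i : ℕ) :
    Set.range (ConnSub.map (ends := ends) (Embedding.subtype (· ≠ e)) (i := i)) =
      {S | e ∉ S.1} := by
  ext S
  refine ⟨fun ⟨T, hT⟩ => hT ▸ show e ∉ T.1.map _ by simp, fun he => ?_⟩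
  have hS : (S.1.subtype (· ≠ e)).map (Embedding.subtype _) = S.1 := by
    rw [subtype_map]
    exact filter_true_of_mem fun f hf (hfe : f = e) => he (hfe ▸ hf)
  refine ⟨⟨S.1.subtype (· ≠ e), ?_, ?_⟩, Subtype.ext hS⟩
  · rw [← card_map, hS, S.2.1]
  · rw [isConn_comp_iff, hS]
    exact S.2.2

variable [LinearOrder E'] [LinearOrder E]

theorem nuEdge_map {φ : E' ↪ E} (hφ : StrictMono φ) (f : E') (S : Finset E') :
    nuEdge (φ f) (S.map φ) = nuEdge f S := by
  simp only [nuEdge, filter_map, card_map, comp_def, hφ.lt_iff_lt]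

theorem bdry_comp_map [DecidableEq E'] [DecidableEq E] {φ : E' ↪ E} (hφ : StrictMono φ)
    (i : ℕ) : (bdry ends i).comp (CConn.map φ (i + 1)) =
      (CConn.map φ i).comp (bdry (fun f => ends (φ f)) i) := by
  refine CConn.linearMap_ext fun S => ?_
  simp only [LinearMap.comp_apply, CConn.map_chainOf, bdry_chainOf, map_sum, map_zsmul,
    sum_map, nuEdge_map hφ, map_erase]

end Deletion

theorem insert_map_subtype_eq_iff [DecidableEq E] {e : E} (T : Finset {f : E // f ≠ e})
    (S : Finset E) :
    insert e (T.map (Embedding.subtype _)) = S ↔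
      e ∈ S ∧ T.map (Embedding.subtype _) = S.erase e := by
  constructor
  · rintro rfl
    exact ⟨mem_insert_self _ _, (erase_insert (by simp)).symm⟩
  · rintro ⟨he, hT⟩
    rw [hT, insert_erase he]

theorem map_subtype_eq_erase_iff [DecidableEq E] {e : E} (T : Finset {f : E // f ≠ e})
    (S : Finset E) : T.map (Embedding.subtype _) = S.erase e ↔ T = S.subtype (· ≠ e) := by
  rw [← filter_ne', ← subtype_map, map_inj]

theorem Finset.erase_subtype [DecidableEq E] {p : E → Prop} [DecidablePred p] (S : Finset E)
    (g : Subtype p) : (S.subtype p).erase g = (S.erase g.1).subtype p := by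
  ext x
  simp [Subtype.ext_iff]

theorem nuEdge_erase_of_le [LinearOrder E] {e f : E} (hfe : f ≤ e) (S : Finset E) :
    nuEdge f (S.erase e) = nuEdge f S := by
  unfold nuEdge
  rw [filter_erase, erase_eq_of_notMem]
  simp [hfe]

theorem nuEdge_subtype_ne [LinearOrder E] {e : E} (hlargest : ∀ f, f ≤ e)
    (g : {f : E // f ≠ e}) (S : Finset E) : nuEdge g (S.subtype (· ≠ e)) = nuEdge g.1 S := by
  rw [← nuEdge_map (φ := Embedding.subtype _) (Subtype.strictMono_coe _) g, subtype_map,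
    filter_ne', Embedding.subtype_apply, nuEdge_erase_of_le (hlargest g)]

section ContractionMap

variable [DecidableEq V] {ends : E → Sym2 V} {e : E} {a b : V} {hab : a ≠ b}

section

variable [DecidableEq E]

def ConnSub.uncontract (hends : ends e = s(a, b)) {i : ℕ}
    (T : ConnSub (contractEnds ends e a b hab) i) : ConnSub ends (i + 1) :=
  ⟨insert e (T.1.map (Embedding.subtype _)),
    by rw [card_insert_of_notMem (by simp), card_map, T.2.1],
    (isConn_contractEnds_iff hends T.1).1 T.2.2⟩

theorem ConnSub.uncontract_val_subtype (hends : ends e = s(a, b)) {i : ℕ}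
    (T : ConnSub (contractEnds ends e a b hab) i) :
    (ConnSub.uncontract hends T).1.subtype (· ≠ e) = T.1 :=
  ((map_subtype_eq_erase_iff _ _).1 ((insert_map_subtype_eq_iff _ _).1 rfl).2).symm

theorem ConnSub.uncontract_injective (hends : ends e = s(a, b)) (i : ℕ) :
    Injective (ConnSub.uncontract (hab := hab) hends (i := i)) := fun T T' h =>
  Subtype.ext <| by rw [← uncontract_val_subtype hends T, h, uncontract_val_subtype]

theorem ConnSub.range_uncontract (hends : ends e = s(a, b)) (i : ℕ) :
    Set.range (ConnSub.uncontract (hab := hab) hends (i := i)) = {S | e ∈ S.1} := by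
  ext S
  refine ⟨fun ⟨T, hT⟩ => hT ▸ mem_insert_self _ _, fun he => ?_⟩
  have hS : insert e ((S.1.subtype (· ≠ e)).map (Embedding.subtype _)) = S.1 :=
    (insert_map_subtype_eq_iff _ _).2 ⟨he, (map_subtype_eq_erase_iff _ _).2 rfl⟩
  have hcard : (S.1.subtype (· ≠ e)).card = i := by
    have := congrArg card hS
    rwa [card_insert_of_notMem (by simp), card_map, S.2.1, Nat.add_right_cancel_iff] at this
  have hconn : IsConn (contractEnds ends e a b hab) (S.1.subtype (· ≠ e)) := by
    rw [isConn_contractEnds_iff hends, hS]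
    exact S.2.2
  exact ⟨⟨_, hcard, hconn⟩, Subtype.ext hS⟩

/-- `β` is defined dually: the coefficient of `T` in `β x` is the coefficient of `T ∪ {e}` in
`x`. -/
def CConn.contract (hends : ends e = s(a, b)) (i : ℕ) :
    CConn ends (i + 1) →ₗ[ℤ] CConn (contractEnds ends e a b hab) i :=
  Finsupp.lcomapDomain _ (ConnSub.uncontract_injective hends i)

theorem CConn.contract_apply (hends : ends e = s(a, b)) {i : ℕ} (x : CConn ends (i + 1))
    (T : ConnSub (contractEnds ends e a b hab) i) :
    CConn.contract hends i x T = x (ConnSub.uncontract hends T) :=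
  rfl

theorem CConn.contract_surjective (hends : ends e = s(a, b)) (i : ℕ) :
    Surjective (CConn.contract (hab := hab) hends i) :=
  (Finsupp.leftInverse_lcomapDomain_mapDomain _ _).surjective

theorem CConn.contract_single_one_apply (hends : ends e = s(a, b)) (i : ℕ)
    (S : ConnSub ends (i + 1)) (T : ConnSub (contractEnds ends e a b hab) i) :
    CConn.contract hends i (Finsupp.single S 1) T =
      if e ∈ S.1 ∧ T.1.map (Embedding.subtype _) = S.1.erase e then 1 else 0 := by
  rw [contract_apply, Finsupp.single_apply]
  refine if_congr ?_ rfl rfl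
  rw [← insert_map_subtype_eq_iff, eq_comm]
  exact Subtype.ext_iff

theorem CConn.contract_chainOf (hends : ends e = s(a, b)) {i : ℕ} (S : Finset E) :
    CConn.contract (hab := hab) hends i (chainOf ends (i + 1) S) =
      if e ∈ S then chainOf _ i (S.subtype (· ≠ e)) else 0 := by
  ext T
  rw [contract_apply, chainOf_apply]
  by_cases he : e ∈ S
  · rw [if_pos he, chainOf_apply]
    refine if_congr ?_ rfl rfl
    rw [ConnSub.uncontract, insert_map_subtype_eq_iff, map_subtype_eq_erase_iff]
    exact and_iff_right he
  · have hT : (ConnSub.uncontract hends T).1 ≠ S := fun h => he (h ▸ mem_insert_self _ _)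
    rw [if_neg he, Finsupp.zero_apply, if_neg hT]

theorem range_map_eq_ker_contract (hends : ends e = s(a, b)) (i : ℕ) :
    LinearMap.range (CConn.map (Embedding.subtype (· ≠ e)) (i + 1)) =
      LinearMap.ker (CConn.contract (hab := hab) hends i) := by
  ext x
  change x ∈ Set.range (Finsupp.mapDomain _) ↔ _
  rw [Finsupp.mem_range_mapDomain_iff _ (ConnSub.map_injective _ _), ConnSub.range_map_subtype e,
    LinearMap.mem_ker, Finsupp.ext_iff]
  simp only [CConn.contract_apply, Finsupp.zero_apply, Set.mem_ofPred_eq, not_not]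
  rw [← Set.forall_mem_range (p := (x · = 0)), ConnSub.range_uncontract]
  rfl

end

theorem bdry_comp_contract [LinearOrder E] (hends : ends e = s(a, b)) (hlargest : ∀ f, f ≤ e)
    (i : ℕ) : (bdry (contractEnds ends e a b hab) i).comp (CConn.contract hends (i + 1)) =
      (CConn.contract hends i).comp (bdry ends (i + 1)) := by
  refine CConn.linearMap_ext fun S => ?_
  simp only [LinearMap.comp_apply, bdry_chainOf, map_sum, map_zsmul, CConn.contract_chainOf]
  by_cases he : e ∈ S.1
  · rw [if_pos he, bdry_chainOf, ← sum_filter_of_ne (p := (· ≠ e)),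
      ← sum_subtype_eq_sum_filter]
    · refine sum_congr rfl fun g _ => ?_
      rw [if_pos (mem_erase.2 ⟨g.2.symm, he⟩), nuEdge_subtype_ne hlargest, erase_subtype]
    · rintro f - hf rfl
      simp at hf
  · rw [if_neg he, map_zero]
    refine (sum_eq_zero fun f _ => ?_).symm
    rw [if_neg fun h => he (mem_of_mem_erase h), smul_zero]

end ContractionMap

theorem ConnSub.isEmpty_zero [Nontrivial V] (ends : E → Sym2 V) : IsEmpty (ConnSub ends 0) := by
  refine ⟨fun S => ?_⟩
  obtain ⟨x, y, hxy⟩ := exists_pair_ne V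
  have hxy' := S.2.2 x y
  rw [card_eq_zero.1 S.2.1, reflTransGen_iff_eq fun _ ⟨_, hf, _⟩ => notMem_empty _ hf] at hxy'
  exact hxy hxy'.symm

theorem deletion_contraction_short_exact_sequence_general
    [DecidableEq V] [LinearOrder E]
    (ends : E → Sym2 V) (e : E) (a b : V) (hab : a ≠ b) (hends : ends e = s(a, b))
    (hlargest : ∀ f : E, f ≤ e) :
    ∃ (α : ∀ i : ℕ, CConn (fun f : {f : E // f ≠ e} => ends f.1) i →ₗ[ℤ] CConn ends i)
      (β : ∀ i : ℕ, CConn ends (i + 1) →ₗ[ℤ] CConn (contractEnds ends e a b hab) i),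
      (∀ (i : ℕ) (S : ConnSub (fun f : {f : E // f ≠ e} => ends f.1) i) (T : ConnSub ends i),
        (α i (Finsupp.single S 1)) T =
          if T.1 = S.1.map (Function.Embedding.subtype fun f => f ≠ e) then 1 else 0) ∧
      (∀ (i : ℕ) (S : ConnSub ends (i + 1)) (T : ConnSub (contractEnds ends e a b hab) i),
        (β i (Finsupp.single S 1)) T =
          if e ∈ S.1 ∧ T.1.map (Function.Embedding.subtype fun f => f ≠ e) = S.1.erase e
            then 1 else 0) ∧
      (∀ i : ℕ, Function.Injective (α i)) ∧
      (∀ i : ℕ, Function.Surjective (β i)) ∧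
      (∀ i : ℕ, LinearMap.range (α (i + 1)) = LinearMap.ker (β i)) ∧
      LinearMap.range (α 0) = ⊤ ∧
      (∀ i : ℕ,
        (bdry ends i).comp (α (i + 1)) =
          (α i).comp (bdry (fun f : {f : E // f ≠ e} => ends f.1) i)) ∧
      (∀ i : ℕ,
        (bdry (contractEnds ends e a b hab) i).comp (β (i + 1)) =
          (β i).comp (bdry ends (i + 1))) := by
  have : Nontrivial V := ⟨⟨a, b, hab⟩⟩
  have := ConnSub.isEmpty_zero ends
  refine ⟨CConn.map (Embedding.subtype _), CConn.contract hends,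
    CConn.map_single_one_apply (Embedding.subtype _), CConn.contract_single_one_apply hends,
    CConn.map_injective _, CConn.contract_surjective hends, range_map_eq_ker_contract hends,
    ((Submodule.subsingleton_iff ℤ).2 inferInstance).elim _ _,
    bdry_comp_map (Subtype.strictMono_coe _), bdry_comp_contract hends hlargest⟩

theorem deletion_contraction_short_exact_sequence
    [Fintype V] [DecidableEq V] [Fintype E] [LinearOrder E]
    (ends : E → Sym2 V) (e : E) (a b : V) (hab : a ≠ b) (hends : ends e = s(a, b))
    (hlargest : ∀ f : E, f ≤ e) :
    ∃ (α : ∀ i : ℕ, CConn (fun f : {f : E // f ≠ e} => ends f.1) i →ₗ[ℤ] CConn ends i)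
      (β : ∀ i : ℕ, CConn ends (i + 1) →ₗ[ℤ] CConn (contractEnds ends e a b hab) i),
      (∀ (i : ℕ) (S : ConnSub (fun f : {f : E // f ≠ e} => ends f.1) i) (T : ConnSub ends i),
        (α i (Finsupp.single S 1)) T =
          if T.1 = S.1.map (Function.Embedding.subtype fun f => f ≠ e) then 1 else 0) ∧
      (∀ (i : ℕ) (S : ConnSub ends (i + 1)) (T : ConnSub (contractEnds ends e a b hab) i),
        (β i (Finsupp.single S 1)) T =
          if e ∈ S.1 ∧ T.1.map (Function.Embedding.subtype fun f => f ≠ e) = S.1.erase e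
            then 1 else 0) ∧
      (∀ i : ℕ, Function.Injective (α i)) ∧
      (∀ i : ℕ, Function.Surjective (β i)) ∧
      (∀ i : ℕ, LinearMap.range (α (i + 1)) = LinearMap.ker (β i)) ∧
      LinearMap.range (α 0) = ⊤ ∧
      (∀ i : ℕ,
        (bdry ends i).comp (α (i + 1)) =
          (α i).comp (bdry (fun f : {f : E // f ≠ e} => ends f.1) i)) ∧
      (∀ i : ℕ,
        (bdry (contractEnds ends e a b hab) i).comp (β (i + 1)) =
          (β i).comp (bdry ends (i + 1))) :=
  deletion_contraction_short_exact_sequence_general ends e a b hab hends hlargest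

end
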